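/- For every d ≥ 1, the tensor W_d = Σ_{j=0}^{d-1} e₁^{⊗(d-j-1)} ⊗ e₂ ⊗ e₁^{⊗j} ∈ (ℂ²)^{⊗d} has tensor rank equal to d. -/

import Mathlib

/-- The rank of a multi-mode tensor over `ℂ`. -/
noncomputable def tensorRank {ι : Type*} [Fintype ι] {n : ι → ℕ}
    (T : ((i : ι) → Fin (n i)) → ℂ) : ℕ :=
  sInf {r : ℕ | ∃ x : Fin r → (i : ι) → Fin (n i) → ℂ,
    T = fun idx => ∑ k, ∏ i, x k i (idx i)}

/-- The `W_d` state in `(ℂ²)^{⊗d}`: the entry at a multi-index is `1` exactly when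
precisely one coordinate equals `1` (i.e. `e₂`), and `0` otherwise. -/
def Wd (d : ℕ) : ((_ : Fin d) → Fin 2) → ℂ :=
  fun idx => if (Finset.univ.filter fun j => idx j = 1).card = 1 then 1 else 0

/-!
Upper bound: if `ζ` is a primitive `d`-th root of unity, then
`W_d = (1/d) ∑_k ζ^{-k} (e₁ + ζ^k e₂)^{⊗d}`, because the entry at a multi-index with `m` ones is
`(1/d) ∑_k ζ^{k(m-1)} = [m = 1]` for `0 ≤ m ≤ d`.

Lower bound, by substitution: in a decomposition of `W_{m+2} + c e₁^{⊗(m+2)}`, the slice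
`x₁ = e₂` equals `e₁^{⊗(m+1)}`, so some summand has first factor with nonzero `e₂`-coordinate.
Contracting the first mode with a functional that kills this factor turns the decomposition into one
of `W_{m+1} + c' e₁^{⊗(m+1)}` with one summand fewer.
-/

open Finset

theorem tensorRank_eq_of_forall_le {ι : Type*} [Fintype ι] {n : ι → ℕ}
    {T : ((i : ι) → Fin (n i)) → ℂ} {r : ℕ}
    (hr : ∃ x : Fin r → (i : ι) → Fin (n i) → ℂ, T = fun idx => ∑ k, ∏ i, x k i (idx i))
    (hmin : ∀ (s : ℕ) (x : Fin s → (i : ι) → Fin (n i) → ℂ),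
      (T = fun idx => ∑ k, ∏ i, x k i (idx i)) → r ≤ s) :
    tensorRank T = r :=
  le_antisymm (Nat.sInf_le hr) (le_csInf ⟨r, hr⟩ fun s ⟨x, hx⟩ => hmin s x hx)

theorem exists_sum_prod_eq_contract_head {R α κ : Type*} [CommRing R] [Fintype α] [Fintype κ]
    [DecidableEq κ] {m : ℕ} (x : κ → Fin (m + 2) → α → R) (u : α → R) (k₀ : κ)
    (hk₀ : ∑ a, u a * x k₀ 0 a = 0) :
    ∃ y : {k // k ≠ k₀} → Fin (m + 1) → α → R, ∀ t : Fin (m + 1) → α,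
      ∑ a, u a * ∑ k, ∏ i, x k i ((Fin.cons a t : Fin (m + 2) → α) i) = ∑ k, ∏ i, y k i (t i) := by
  set c : κ → R := fun k => ∑ a, u a * x k 0 a
  refine ⟨fun k i b => (if i = 0 then c k else 1) * x k i.succ b, fun t => ?_⟩
  calc ∑ a, u a * ∑ k, ∏ i, x k i ((Fin.cons a t : Fin (m + 2) → α) i)
      = ∑ k, c k * ∏ i : Fin (m + 1), x k i.succ (t i) := by
        simp only [Fin.prod_univ_succ, Fin.cons_zero, Fin.cons_succ, c, mul_sum, sum_mul]
        rw [sum_comm]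
        exact sum_congr rfl fun k _ => sum_congr rfl fun a _ => by ring
    _ = ∑ k : {k // k ≠ k₀}, c k * ∏ i : Fin (m + 1), x k i.succ (t i) := by
        rw [Fintype.sum_eq_add_sum_subtype_ne _ k₀, show c k₀ = 0 from hk₀, zero_mul, zero_add]
    _ = _ := by
        simp only [prod_mul_distrib, Fintype.prod_ite_eq']

theorem IsPrimitiveRoot.sum_range_pow_pow {R : Type*} [CommRing R] [IsDomain R] {ζ : R} {d : ℕ}
    (hζ : IsPrimitiveRoot ζ d) (j : ℕ) :
    ∑ k ∈ range d, (ζ ^ j) ^ k = if d ∣ j then (d : R) else 0 := by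
  split_ifs with hdj
  · simp [(hζ.pow_eq_one_iff_dvd j).mpr hdj]
  · have hne : ζ ^ j - 1 ≠ 0 := sub_ne_zero.mpr fun h => hdj ((hζ.pow_eq_one_iff_dvd j).mp h)
    refine (mul_eq_zero.mp ?_).resolve_right hne
    rw [geom_sum_mul, ← pow_mul, mul_comm, pow_mul, hζ.pow_eq_one, one_pow, sub_self]

theorem dvd_add_sub_one_iff {d m : ℕ} (hd : 2 ≤ d) (hm : m ≤ d) : d ∣ m + (d - 1) ↔ m = 1 := by
  constructor
  · rintro ⟨q, hq⟩
    rcases q with _ | _ | q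
    · omega
    · omega
    · obtain ⟨e, rfl⟩ : ∃ e, d = e + 1 := ⟨d - 1, by omega⟩
      simp only [add_tsub_cancel_right] at hq
      nlinarith
  · rintro rfl
    exact ⟨1, by omega⟩

/-- `e₁^{⊗d}`. -/
def Ed (d : ℕ) : ((_ : Fin d) → Fin 2) → ℂ :=
  fun idx => if (Finset.univ.filter fun j => idx j = 1).card = 0 then 1 else 0

theorem card_filter_cons_eq_one {m : ℕ} (a : Fin 2) (t : Fin m → Fin 2) :
    (univ.filter fun j => (Fin.cons a t : Fin (m + 1) → Fin 2) j = 1).card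
      = (if a = 1 then 1 else 0) + (univ.filter fun j => t j = 1).card := by
  simp only [card_filter, Fin.sum_univ_succ, Fin.cons_zero, Fin.cons_succ]

@[simp] theorem Wd_cons_zero {m : ℕ} (t : Fin m → Fin 2) :
    Wd (m + 1) (Fin.cons 0 t) = Wd m t := by
  simp [Wd, card_filter_cons_eq_one]

@[simp] theorem Wd_cons_one {m : ℕ} (t : Fin m → Fin 2) :
    Wd (m + 1) (Fin.cons 1 t) = Ed m t := by
  simp [Wd, Ed, card_filter_cons_eq_one]

@[simp] theorem Ed_cons_zero {m : ℕ} (t : Fin m → Fin 2) :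
    Ed (m + 1) (Fin.cons 0 t) = Ed m t := by
  simp [Ed, card_filter_cons_eq_one]

@[simp] theorem Ed_cons_one {m : ℕ} (t : Fin m → Fin 2) :
    Ed (m + 1) (Fin.cons 1 t) = 0 := by
  simp [Ed, card_filter_cons_eq_one]

@[simp] theorem Ed_zero (m : ℕ) : Ed m 0 = 1 := by
  simp [Ed]

theorem exists_ne_zero_of_Wd_add_Ed_eq {m : ℕ} {c : ℂ} {κ : Type*} [Fintype κ]
    {x : κ → Fin (m + 1) → Fin 2 → ℂ}
    (h : ∀ idx, Wd (m + 1) idx + c * Ed (m + 1) idx = ∑ k, ∏ i, x k i (idx i)) :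
    ∃ k, x k 0 1 ≠ 0 := by
  have h1 := h (Fin.cons 1 0)
  simp only [Wd_cons_one, Ed_cons_one, Ed_zero, mul_zero, add_zero, Fin.prod_univ_succ,
    Fin.cons_zero] at h1
  obtain ⟨k, -, hk⟩ := exists_ne_zero_of_sum_ne_zero (h1 ▸ one_ne_zero)
  exact ⟨k, left_ne_zero_of_mul hk⟩

theorem le_card_of_Wd_add_Ed_eq (m : ℕ) (c : ℂ) {κ : Type*} [Fintype κ] [DecidableEq κ]
    (x : κ → Fin (m + 1) → Fin 2 → ℂ)
    (h : ∀ idx, Wd (m + 1) idx + c * Ed (m + 1) idx = ∑ k, ∏ i, x k i (idx i)) :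
    m + 1 ≤ Fintype.card κ := by
  induction m generalizing c κ with
  | zero => exact Fintype.card_pos_iff.mpr (exists_ne_zero_of_Wd_add_Ed_eq h).nonempty
  | succ m ih =>
    obtain ⟨k₀, hk₀⟩ := exists_ne_zero_of_Wd_add_Ed_eq h
    set r := x k₀ 0 0 / x k₀ 0 1
    obtain ⟨y, hy⟩ := exists_sum_prod_eq_contract_head x ![1, -r] k₀ (by simp [r, hk₀])
    have hW : ∀ t, Wd (m + 1) t + (c - r) * Ed (m + 1) t = ∑ k, ∏ i, y k i (t i) := by
      intro t
      rw [← hy, Fin.sum_univ_two, ← h, ← h]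
      simp only [Matrix.cons_val_zero, Matrix.cons_val_one, Matrix.cons_val_fin_one,
        Wd_cons_zero, Ed_cons_zero, Wd_cons_one, Ed_cons_one]
      ring
    have hcard : Fintype.card {k // k ≠ k₀} = Fintype.card κ - 1 := by
      rw [Fintype.card_subtype_compl, Fintype.card_subtype_eq]
    have hle := ih (c - r) y hW
    have hpos := Fintype.card_pos_iff.mpr ⟨k₀⟩
    omega

theorem exists_Wd_eq_sum_prod_of_two_le {d : ℕ} (hd : 2 ≤ d) :
    ∃ x : Fin d → Fin d → Fin 2 → ℂ, Wd d = fun idx => ∑ k, ∏ i, x k i (idx i) := by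
  obtain ⟨ζ, hζ⟩ : ∃ ζ : ℂ, IsPrimitiveRoot ζ d :=
    ⟨_, Complex.isPrimitiveRoot_exp d (by omega)⟩
  have : NeZero d := ⟨by omega⟩
  -- the `k`-th summand is `ζ^{-k}/d · (e₁ + ζ^k e₂)^{⊗d}`, written with `ζ^{-1} = ζ^{d-1}`
  refine ⟨fun k i a =>
    (if i = 0 then ζ ^ ((d - 1) * k) / d else 1) * (if a = 1 then ζ ^ (k : ℕ) else 1), ?_⟩
  funext idx
  set m := (univ.filter fun j => idx j = 1).card with hm
  have hprod : ∀ k : Fin d, ∏ i, (if i = 0 then ζ ^ ((d - 1) * k) / d else 1) *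
      (if idx i = 1 then ζ ^ (k : ℕ) else 1) = (ζ ^ (m + (d - 1))) ^ (k : ℕ) / d := by
    intro k
    rw [prod_mul_distrib, Fintype.prod_ite_eq', ← prod_filter, prod_const, ← hm]
    ring
  have hmd : m ≤ d := card_le_univ _ |>.trans_eq (Fintype.card_fin d)
  simp only [hprod, ← sum_div, Fin.sum_univ_eq_sum_range (fun k => (ζ ^ (m + (d - 1))) ^ k),
    hζ.sum_range_pow_pow, dvd_add_sub_one_iff hd hmd, Wd, ← hm]
  split_ifs <;> simp [show (d : ℂ) ≠ 0 by exact_mod_cast NeZero.ne d]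

theorem exists_Wd_eq_sum_prod (d : ℕ) :
    ∃ x : Fin d → Fin d → Fin 2 → ℂ, Wd d = fun idx => ∑ k, ∏ i, x k i (idx i) := by
  rcases d with _ | _ | d
  · exact ⟨0, funext fun idx => by simp [Wd]⟩
  · refine ⟨fun _ _ a => if a = 1 then 1 else 0, funext fun idx => ?_⟩
    have : (univ.filter fun j => idx j = 1).card = if idx 0 = 1 then 1 else 0 := by
      rw [card_filter, Fin.sum_univ_one]
    rw [Wd, this]
    by_cases h : idx 0 = 1 <;> simp [h]
  · exact exists_Wd_eq_sum_prod_of_two_le (by omega)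

theorem tensorRank_Wd_general (d : ℕ) :
    tensorRank (n := fun _ : Fin d => 2) (Wd d) = d := by
  refine tensorRank_eq_of_forall_le (exists_Wd_eq_sum_prod d) fun s x hx => ?_
  rcases d with _ | m
  · exact s.zero_le
  · simpa using le_card_of_Wd_add_Ed_eq m 0 x fun idx => by simp [hx]

/-- For every `d ≥ 1`, the tensor `W_d` has tensor rank `d`. -/
theorem tensorRank_Wd (d : ℕ) (hd : 1 ≤ d) :
    tensorRank (n := fun _ : Fin d => 2) (Wd d) = d :=
  tensorRank_Wd_general d
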